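/- arXiv:1304.1182 — 2 statements merged into one kernel-verified Lean document; each statement's English description precedes it below -/
import Mathlib

section
/- Let N ≥ 3, μ > 0, ω > 0, α ∈ ℝ, ε ∈ {-1,+1}^N and a ≥ 0, and let Ψ be the N-tuple with components ψ_i = φ_{ω, ε_i a} restricted to [0,∞). Then Ψ satisfies the δ vertex condition of strength α (i.e. ψ_1(0) = ⋯ = ψ_N(0) and Σ_{i=1}^N ψ_i′(0) = α ψ_1(0)) if and only if tanh(μ√ω a) · Σ_{i=1}^N ε_i = α/√ω. -/
/-!
Since `sech` is even, every component takes the same positive value `φ_{ω,a}(0)` at the vertex.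
The profile satisfies `φ' = -√ω tanh(μ√ω (x - a)) φ`, and `tanh` is odd, so the derivative sum
is `√ω tanh(μ√ω a) Σ ε_i · φ_{ω,a}(0)`; cancelling the positive factor `φ_{ω,a}(0)` gives the
condition.
-/

open Real MeasureTheory

/-- `sech y = 1 / cosh y`. -/
noncomputable def sech (y : ℝ) : ℝ := 1 / Real.cosh y

/-- The half-line soliton profile `φ_{ω,a}(x) = [(μ+1)ω]^{1/(2μ)} sech^{1/μ}(μ√ω (x-a))`. -/
noncomputable def solProfile (μ ω a : ℝ) (x : ℝ) : ℝ :=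
  ((μ + 1) * ω) ^ (1 / (2 * μ)) * sech (μ * Real.sqrt ω * (x - a)) ^ (1 / μ)

lemma sech_pos (y : ℝ) : 0 < sech y :=
  one_div_pos.mpr (cosh_pos y)

lemma sech_neg (y : ℝ) : sech (-y) = sech y := by
  simp only [sech, cosh_neg]

lemma hasDerivAt_sech (x : ℝ) : HasDerivAt sech (-sech x * tanh x) x := by
  have h := (hasDerivAt_cosh x).inv (cosh_pos x).ne'
  have hsech : cosh⁻¹ = sech := funext fun y => (one_div _).symm
  rw [hsech] at h
  refine h.congr_deriv ?_
  rw [sech, tanh_eq_sinh_div_cosh]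
  field_simp

lemma tanh_sign_mul {ε : ℝ} (hε : ε = 1 ∨ ε = -1) (y : ℝ) : tanh (ε * y) = ε * tanh y := by
  rcases hε with rfl | rfl <;> simp [tanh_neg]

lemma solProfile_neg_neg (μ ω a x : ℝ) : solProfile μ ω (-a) (-x) = solProfile μ ω a x := by
  rw [solProfile, solProfile, show μ * √ω * (-x - -a) = -(μ * √ω * (x - a)) by ring, sech_neg]

lemma solProfile_sign_mul_zero {ε : ℝ} (hε : ε = 1 ∨ ε = -1) (μ ω a : ℝ) :
    solProfile μ ω (ε * a) 0 = solProfile μ ω a 0 := by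
  rcases hε with rfl | rfl
  · rw [one_mul]
  · rw [neg_one_mul, ← solProfile_neg_neg, neg_zero, neg_neg]

lemma solProfile_pos {μ ω : ℝ} (h : 0 < (μ + 1) * ω) (a x : ℝ) : 0 < solProfile μ ω a x :=
  mul_pos (rpow_pos_of_pos h _) (rpow_pos_of_pos (sech_pos _) _)

lemma hasDerivAt_solProfile {μ : ℝ} (hμ : μ ≠ 0) (ω a x : ℝ) :
    HasDerivAt (solProfile μ ω a)
      (-√ω * tanh (μ * √ω * (x - a)) * solProfile μ ω a x) x := by
  have hlin : HasDerivAt (fun y => μ * √ω * (y - a)) (μ * √ω) x := by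
    simpa using ((hasDerivAt_id x).sub_const a).const_mul (μ * √ω)
  have h := (((hasDerivAt_sech _).comp x hlin).rpow_const
    (p := 1 / μ) (Or.inl (sech_pos _).ne')).const_mul (((μ + 1) * ω) ^ (1 / (2 * μ)))
  refine (h : HasDerivAt (solProfile μ ω a) _ x).congr_deriv ?_
  have hsech := (sech_pos (μ * √ω * (x - a))).ne'
  rw [Function.comp_apply, solProfile, rpow_sub_one hsech]
  field_simp

lemma deriv_solProfile_sign_mul_zero {μ : ℝ} (hμ : μ ≠ 0) {ε : ℝ} (hε : ε = 1 ∨ ε = -1)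
    (ω a : ℝ) :
    deriv (solProfile μ ω (ε * a)) 0
      = ε * (√ω * tanh (μ * √ω * a) * solProfile μ ω a 0) := by
  rw [(hasDerivAt_solProfile hμ ω (ε * a) 0).deriv, solProfile_sign_mul_zero hε,
    show μ * √ω * (0 - ε * a) = -(ε * (μ * √ω * a)) by ring, tanh_neg, tanh_sign_mul hε]
  ring

/-- for `N ≥ 3`, `μ > 0`, `ω > 0`, `α ∈ ℝ`, signs `ε ∈ {-1,1}^N` and `a ≥ 0`,
the `N`-tuple with components `φ_{ω, ε_i a}` satisfies the `δ` vertex condition of strength `α`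
(common value at `0` and `Σ_i ψ_i′(0) = α ψ_1(0)`) if and only if
`tanh(μ√ω a) Σ_i ε_i = α / √ω`. -/
theorem delta_condition_iff_tanh (N : ℕ) (hN : 3 ≤ N) (μ ω α : ℝ)
    (hμ : 0 < μ) (hω : 0 < ω)
    (ε : Fin N → ℝ) (hε : ∀ i, ε i = 1 ∨ ε i = -1) (a : ℝ) :
    ((∀ i j : Fin N, solProfile μ ω (ε i * a) 0 = solProfile μ ω (ε j * a) 0) ∧
      (∑ i : Fin N, deriv (solProfile μ ω (ε i * a)) 0)
        = α * solProfile μ ω (ε ⟨0, by omega⟩ * a) 0)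
    ↔ Real.tanh (μ * Real.sqrt ω * a) * (∑ i : Fin N, ε i) = α / Real.sqrt ω := by
  have hP : 0 < solProfile μ ω a 0 := solProfile_pos (by positivity) a 0
  have hsqrt : 0 < √ω := sqrt_pos.mpr hω
  simp only [solProfile_sign_mul_zero (hε _), deriv_solProfile_sign_mul_zero hμ.ne' (hε _),
    ← Finset.sum_mul, implies_true, true_and]
  rw [show (∑ i, ε i) * (√ω * tanh (μ * √ω * a) * solProfile μ ω a 0)
      = (√ω * (tanh (μ * √ω * a) * ∑ i, ε i)) * solProfile μ ω a 0 by ring,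
    mul_left_inj' hP.ne', eq_div_iff hsqrt.ne', mul_comm]
end

section
/- Let N ≥ 4 be even, μ > 0, ω > 0, and let v, a, θ ∈ ℝ. Define, for each t ∈ ℝ, the N-tuple Ψ_t with components ψ_i(x,t) = e^{-i(v/2)x} e^{i(ω - v²/4)t} e^{iθ} φ_{ω, -(a+vt)}(x) for 1 ≤ i ≤ N/2 and ψ_i(x,t) = e^{+i(v/2)x} e^{i(ω - v²/4)t} e^{iθ} φ_{ω, a+vt}(x) for N/2 < i ≤ N. Then each component satisfies i ∂ψ/∂t = -∂²ψ/∂x² - |ψ|^{2μ} ψ on (0,∞) for all t, and for every t the tuple Ψ_t satisfies the Kirchhoff vertex condition (all components have the same value at x = 0 and the sum of the derivatives at x = 0 vanishes). Hence travelling waves exist on a Kirchhoff star graph with an even number of edges. -/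
open Real MeasureTheory

/-- The sign `s_i`: `-1` on the first `N/2` edges and `+1` on the others. -/
noncomputable def halfSign (N : ℕ) (i : Fin N) : ℝ := if (i : ℕ) < N / 2 then -1 else 1

/-- The travelling wave on an even Kirchhoff star graph:
`ψ_i(x,t) = e^{s_i i(v/2)x} e^{i(ω - v²/4)t} e^{iθ} φ_{ω, s_i(a+vt)}(x)` with `s_i = ∓1`
according as `i ≤ N/2` or `i > N/2`. -/
noncomputable def travellingWave (N : ℕ) (μ ω v a θ : ℝ) (i : Fin N) (x t : ℝ) : ℂ :=
  Complex.exp ((halfSign N i : ℂ) * Complex.I * (v / 2) * x) *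
  Complex.exp (Complex.I * ((ω : ℂ) - (v : ℂ) ^ 2 / 4) * t) *
  Complex.exp (Complex.I * θ) *
  ((solProfile μ ω (halfSign N i * (a + v * t)) x : ℝ) : ℂ)

/-!
The profile `φ = soliton μ ω` solves `φ'' = ω φ - |φ|^{2μ} φ`, so `e^{iωt} φ(x)` solves the NLS
on the line. A Galilean boost with velocity `s v` preserves the NLS as soon as `s² = 1`, and with
`s = ∓1` it produces the wave on each edge. As `φ` is even and `φ'` odd, all components take the
same value at `x = 0`, while their space derivatives there are `s` times a common number; half of
the signs are `-1` and half are `+1`, so these derivatives sum to zero.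
-/

theorem Real.hasDerivAt_tanh (y : ℝ) : HasDerivAt Real.tanh (1 / Real.cosh y ^ 2) y := by
  have h := (Real.hasDerivAt_sinh y).div (Real.hasDerivAt_cosh y) (Real.cosh_pos y).ne'
  rw [show Real.tanh = Real.sinh / Real.cosh from funext Real.tanh_eq_sinh_div_cosh]
  refine h.congr_deriv ?_
  rw [← Real.cosh_sq_sub_sinh_sq y]
  ring

theorem Real.tanh_sq (y : ℝ) : Real.tanh y ^ 2 = 1 - 1 / Real.cosh y ^ 2 := by
  have := (Real.cosh_pos y).ne'
  rw [Real.tanh_eq_sinh_div_cosh, div_pow, Real.sinh_sq]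
  field_simp

noncomputable def soliton (μ ω y : ℝ) : ℝ :=
  ((μ + 1) * ω) ^ (1 / (2 * μ)) * Real.cosh (μ * √ω * y) ^ (-(1 / μ))

noncomputable def solitonDeriv (μ ω y : ℝ) : ℝ :=
  -√ω * Real.tanh (μ * √ω * y) * soliton μ ω y

theorem solProfile_eq_soliton (μ ω c x : ℝ) : solProfile μ ω c x = soliton μ ω (x - c) := by
  rw [solProfile, soliton, sech, one_div (Real.cosh _), Real.inv_rpow (Real.cosh_pos _).le,
    ← Real.rpow_neg (Real.cosh_pos _).le]

theorem soliton_even (μ ω : ℝ) : Function.Even (soliton μ ω) := fun y => by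
  rw [soliton, soliton, mul_neg, Real.cosh_neg]

theorem solitonDeriv_odd (μ ω : ℝ) : Function.Odd (solitonDeriv μ ω) := fun y => by
  unfold solitonDeriv
  rw [soliton_even, mul_neg, Real.tanh_neg]
  ring

theorem soliton_nonneg {μ ω : ℝ} (hμ : 0 ≤ μ) (hω : 0 ≤ ω) (y : ℝ) :
    0 ≤ soliton μ ω y := by
  unfold soliton
  positivity

theorem soliton_rpow_two_mul {μ ω : ℝ} (hμ : 0 < μ) (hω : 0 ≤ ω) (y : ℝ) :
    soliton μ ω y ^ (2 * μ) = (μ + 1) * ω / Real.cosh (μ * √ω * y) ^ 2 := by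
  have hC : 0 ≤ (μ + 1) * ω := by positivity
  have hcosh := Real.cosh_pos (μ * √ω * y)
  rw [soliton, Real.mul_rpow (by positivity) (by positivity), ← Real.rpow_mul hC,
    ← Real.rpow_mul hcosh.le, show 1 / (2 * μ) * (2 * μ) = 1 by field_simp,
    show -(1 / μ) * (2 * μ) = -(2 : ℕ) by field_simp; norm_num, Real.rpow_one,
    Real.rpow_neg hcosh.le, Real.rpow_natCast, div_eq_mul_inv]

theorem hasDerivAt_soliton {μ ω : ℝ} (hμ : μ ≠ 0) (y : ℝ) :
    HasDerivAt (soliton μ ω) (solitonDeriv μ ω y) y := by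
  have hcosh := Real.cosh_pos (μ * √ω * y)
  have h := ((((hasDerivAt_id y).const_mul (μ * √ω)).cosh).rpow_const (p := -(1 / μ))
    (Or.inl hcosh.ne')).const_mul (((μ + 1) * ω) ^ (1 / (2 * μ)))
  refine h.congr_deriv ?_
  simp only [id, mul_one]
  rw [solitonDeriv, soliton, Real.tanh_eq_sinh_div_cosh, Real.rpow_sub hcosh, Real.rpow_one]
  field_simp

theorem hasDerivAt_solitonDeriv {μ ω : ℝ} (hμ : 0 < μ) (hω : 0 ≤ ω) (y : ℝ) :
    HasDerivAt (solitonDeriv μ ω)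
      (ω * soliton μ ω y - |soliton μ ω y| ^ (2 * μ) * soliton μ ω y) y := by
  have htanh : HasDerivAt (fun z => -√ω * Real.tanh (μ * √ω * z))
      (-√ω * (1 / Real.cosh (μ * √ω * y) ^ 2 * (μ * √ω))) y :=
    (((Real.hasDerivAt_tanh _).comp y ((hasDerivAt_id y).const_mul (μ * √ω))).const_mul
      (-√ω)).congr_deriv (by simp)
  refine (htanh.mul (hasDerivAt_soliton hμ.ne' y)).congr_deriv ?_
  rw [abs_of_nonneg (soliton_nonneg hμ.le hω y), soliton_rpow_two_mul hμ hω, solitonDeriv]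
  linear_combination (ω * soliton μ ω y) * Real.tanh_sq (μ * √ω * y) +
    (Real.tanh (μ * √ω * y) ^ 2 - μ / Real.cosh (μ * √ω * y) ^ 2) * soliton μ ω y *
      Real.sq_sqrt hω

section GalileanWave

open Complex

theorem HasDerivAt.cexp_ofReal_mul_I_mul_ofReal {p g : ℝ → ℝ} {p' g' x : ℝ}
    (hp : HasDerivAt p p' x) (hg : HasDerivAt g g' x) :
    HasDerivAt (fun y => Complex.exp (p y * I) * g y)
      (Complex.exp (p x * I) * (p' * I * g x + g')) x :=
  ((hp.ofReal_comp.mul_const I).cexp.mul hg.ofReal_comp).congr_deriv (by ring)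

variable {f f' : ℝ → ℝ} {ω v a θ s : ℝ}

noncomputable def galileanWave (f : ℝ → ℝ) (ω v a θ s x t : ℝ) : ℂ :=
  Complex.exp ((s * v / 2 * x + (ω - v ^ 2 / 4) * t + θ : ℝ) * I) * f (x - s * (a + v * t))

theorem travellingWave_eq_galileanWave (N : ℕ) (μ ω v a θ : ℝ) (i : Fin N) :
    travellingWave N μ ω v a θ i = galileanWave (soliton μ ω) ω v a θ (halfSign N i) := by
  funext x t
  rw [travellingWave, galileanWave, solProfile_eq_soliton, ← Complex.exp_add,
    ← Complex.exp_add]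
  push_cast
  ring_nf

theorem norm_galileanWave (x t : ℝ) :
    ‖galileanWave f ω v a θ s x t‖ = |f (x - s * (a + v * t))| := by
  rw [galileanWave, norm_mul, norm_exp_ofReal_mul_I, one_mul, norm_real, Real.norm_eq_abs]

theorem hasDerivAt_galileanWave_space (hf : ∀ y, HasDerivAt f (f' y) y) (x t : ℝ) :
    HasDerivAt (galileanWave f ω v a θ s · t)
      (((s * v / 2 : ℝ) : ℂ) * I * galileanWave f ω v a θ s x t
        + galileanWave f' ω v a θ s x t) x := by
  have hp : HasDerivAt (fun y => s * v / 2 * y + (ω - v ^ 2 / 4) * t + θ) (s * v / 2) x := by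
    simpa using ((hasDerivAt_id x).const_mul (s * v / 2)).add_const ((ω - v ^ 2 / 4) * t + θ)
  refine (hp.cexp_ofReal_mul_I_mul_ofReal ((hf _).comp_sub_const x _)).congr_deriv ?_
  rw [galileanWave, galileanWave]
  ring

theorem deriv_galileanWave_space (hf : ∀ y, HasDerivAt f (f' y) y) (t : ℝ) :
    deriv (galileanWave f ω v a θ s · t) =
      fun x => ((s * v / 2 : ℝ) : ℂ) * I * galileanWave f ω v a θ s x t
        + galileanWave f' ω v a θ s x t :=
  funext fun x => (hasDerivAt_galileanWave_space hf x t).deriv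

theorem hasDerivAt_galileanWave_time (hf : ∀ y, HasDerivAt f (f' y) y) (x t : ℝ) :
    HasDerivAt (galileanWave f ω v a θ s x ·)
      (((ω - v ^ 2 / 4 : ℝ) : ℂ) * I * galileanWave f ω v a θ s x t
        - ((s * v : ℝ) : ℂ) * galileanWave f' ω v a θ s x t) t := by
  have hp : HasDerivAt (fun τ => s * v / 2 * x + (ω - v ^ 2 / 4) * τ + θ)
      (ω - v ^ 2 / 4) t := by
    simpa using
      (((hasDerivAt_id t).const_mul (ω - v ^ 2 / 4)).const_add (s * v / 2 * x)).add_const θ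
  have hg : HasDerivAt (fun τ => f (x - s * (a + v * τ)))
      (f' (x - s * (a + v * t)) * -(s * v)) t := by
    refine (hf _).comp t ?_
    simpa using ((((hasDerivAt_id t).const_mul v).const_add a).const_mul s).const_sub x
  refine (hp.cexp_ofReal_mul_I_mul_ofReal hg).congr_deriv ?_
  rw [galileanWave, galileanWave]
  push_cast
  ring

theorem galileanWave_nls {μ : ℝ} (hf : ∀ y, HasDerivAt f (f' y) y)
    (hf' : ∀ y, HasDerivAt f' (ω * f y - |f y| ^ (2 * μ) * f y) y) (hs : s ^ 2 = 1)
    (x t : ℝ) :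
    I * deriv (galileanWave f ω v a θ s x ·) t
      = - deriv (deriv (galileanWave f ω v a θ s · t)) x
        - ((‖galileanWave f ω v a θ s x t‖ ^ (2 * μ) : ℝ) : ℂ)
          * galileanWave f ω v a θ s x t := by
  have hxx : HasDerivAt (fun y => ((s * v / 2 : ℝ) : ℂ) * I * galileanWave f ω v a θ s y t
      + galileanWave f' ω v a θ s y t) _ x :=
    ((hasDerivAt_galileanWave_space hf x t).const_mul _).add
      (hasDerivAt_galileanWave_space hf' x t)
  rw [(hasDerivAt_galileanWave_time hf x t).deriv, deriv_galileanWave_space hf, hxx.deriv,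
    norm_galileanWave]
  have hnonlin : galileanWave (fun y => ω * f y - |f y| ^ (2 * μ) * f y) ω v a θ s x t
      = (ω - |f (x - s * (a + v * t))| ^ (2 * μ) : ℝ) * galileanWave f ω v a θ s x t := by
    simp only [galileanWave]
    push_cast
    ring
  have hs' : (s : ℂ) ^ 2 = 1 := by exact_mod_cast hs
  rw [hnonlin]
  push_cast
  linear_combination
    (ω - v ^ 2 / 4 + s ^ 2 * v ^ 2 / 4 : ℂ) * galileanWave f ω v a θ s x t * I_mul_I
      - v ^ 2 / 4 * galileanWave f ω v a θ s x t * hs'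

theorem galileanWave_zero_of_even (hf : Function.Even f) (hs : s = 1 ∨ s = -1) (t : ℝ) :
    galileanWave f ω v a θ s 0 t = galileanWave f ω v a θ 1 0 t := by
  rcases hs with rfl | rfl
  · rfl
  · simp [galileanWave, ← hf (a + v * t)]

theorem galileanWave_zero_of_odd (hf : Function.Odd f) (hs : s = 1 ∨ s = -1) (t : ℝ) :
    galileanWave f ω v a θ s 0 t = s * galileanWave f ω v a θ 1 0 t := by
  rcases hs with rfl | rfl
  · simp
  · rw [galileanWave, galileanWave,
      show (0 : ℝ) - -1 * (a + v * t) = -(0 - 1 * (a + v * t)) by ring, hf]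
    push_cast
    ring_nf

theorem deriv_galileanWave_space_zero (hf : ∀ y, HasDerivAt f (f' y) y)
    (hf_even : Function.Even f) (hf'_odd : Function.Odd f') (hs : s = 1 ∨ s = -1) (t : ℝ) :
    deriv (galileanWave f ω v a θ s · t) 0 = s * deriv (galileanWave f ω v a θ 1 · t) 0 := by
  rw [(hasDerivAt_galileanWave_space hf 0 t).deriv, (hasDerivAt_galileanWave_space hf 0 t).deriv,
    galileanWave_zero_of_even hf_even hs, galileanWave_zero_of_odd hf'_odd hs]
  push_cast
  ring

end GalileanWave

theorem halfSign_eq_one_or_neg_one (N : ℕ) (i : Fin N) :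
    halfSign N i = 1 ∨ halfSign N i = -1 := by
  unfold halfSign
  split_ifs <;> simp

theorem sum_halfSign {N : ℕ} (hN : Even N) : ∑ i : Fin N, halfSign N i = 0 := by
  obtain ⟨m, rfl⟩ := hN
  simp only [halfSign]
  rw [Fin.sum_univ_eq_sum_range (fun n => if n < (m + m) / 2 then (-1 : ℝ) else 1),
    Finset.sum_range_add, (by omega : (m + m) / 2 = m),
    Finset.sum_congr rfl fun n hn => if_pos (Finset.mem_range.mp hn)]
  simp

theorem travelling_waves_on_even_kirchhoff_general (N : ℕ) (heven : Even N)
    (μ ω v a θ : ℝ) (hμ : 0 < μ) (hω : 0 < ω) :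
    (∀ i : Fin N, ∀ x : ℝ, 0 < x → ∀ t : ℝ,
      Complex.I * deriv (fun s : ℝ => travellingWave N μ ω v a θ i x s) t
        = - deriv (deriv (fun y : ℝ => travellingWave N μ ω v a θ i y t)) x
          - ((‖travellingWave N μ ω v a θ i x t‖ ^ (2 * μ) : ℝ) : ℂ)
              * travellingWave N μ ω v a θ i x t) ∧
    (∀ t : ℝ,
      (∀ i k : Fin N, travellingWave N μ ω v a θ i 0 t = travellingWave N μ ω v a θ k 0 t) ∧
      (∑ i : Fin N, deriv (fun y : ℝ => travellingWave N μ ω v a θ i y t) 0) = 0) := by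
  have hφ : ∀ y, HasDerivAt (soliton μ ω) (solitonDeriv μ ω y) y := hasDerivAt_soliton hμ.ne'
  have hφ' := hasDerivAt_solitonDeriv hμ hω.le
  have hs := halfSign_eq_one_or_neg_one N
  simp only [travellingWave_eq_galileanWave]
  refine ⟨fun i x _ t => galileanWave_nls hφ hφ' (sq_eq_one_iff.mpr (hs i)) x t,
    fun t => ⟨fun i k => ?_, ?_⟩⟩
  · rw [galileanWave_zero_of_even (soliton_even μ ω) (hs i),
      galileanWave_zero_of_even (soliton_even μ ω) (hs k)]
  · simp only [deriv_galileanWave_space_zero hφ (soliton_even μ ω) (solitonDeriv_odd μ ω) (hs _),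
      ← Finset.sum_mul, ← Complex.ofReal_sum, sum_halfSign heven, Complex.ofReal_zero, zero_mul]

/-- for even `N ≥ 4`, `μ > 0`, `ω > 0` and `v, a, θ ∈ ℝ`, each component of the
travelling wave solves the focusing NLS on `(0,∞)` for all times, and at each time the tuple
satisfies the Kirchhoff vertex condition. Hence travelling waves exist on a Kirchhoff star graph
with an even number of edges. -/
theorem travelling_waves_on_even_kirchhoff (N : ℕ) (hN : 4 ≤ N) (heven : Even N)
    (μ ω v a θ : ℝ) (hμ : 0 < μ) (hω : 0 < ω) :
    (∀ i : Fin N, ∀ x : ℝ, 0 < x → ∀ t : ℝ,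
      Complex.I * deriv (fun s : ℝ => travellingWave N μ ω v a θ i x s) t
        = - deriv (deriv (fun y : ℝ => travellingWave N μ ω v a θ i y t)) x
          - ((‖travellingWave N μ ω v a θ i x t‖ ^ (2 * μ) : ℝ) : ℂ)
              * travellingWave N μ ω v a θ i x t) ∧
    (∀ t : ℝ,
      (∀ i k : Fin N, travellingWave N μ ω v a θ i 0 t = travellingWave N μ ω v a θ k 0 t) ∧
      (∑ i : Fin N, deriv (fun y : ℝ => travellingWave N μ ω v a θ i y t) 0) = 0) :=
  travelling_waves_on_even_kirchhoff_general N heven μ ω v a θ hμ hω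
end
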